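/- arXiv:1510.06535 — 2 statements merged into one kernel-verified Lean document; each statement's English description precedes it below -/
import Mathlib

section
/- Consider finite rooted trees where each node carries a natural-number rank, satisfying the invariant: every node of rank r has children of ranks r-1 and r-2 whenever r ≥ 2, and a child of rank 0 whenever r = 1. Then a node of rank r has at least F_{r+3} - 1 descendants (counting itself). -/
/-! Read `r a b` as "`a` is a child of `b`". If every node has at most one parent and there are no
cycles, two distinct children of `v` have disjoint sets of descendants, neither containing `v`.
Hence a node of rank `k + 2` has at least `1 + (F_{k+4} - 1) + (F_{k+3} - 1) = F_{k+5} - 1`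
descendants, by induction on the rank. -/

open Relation

namespace Relation

variable {α : Type*} {r : α → α → Prop} {a b v : α}

theorem not_reflTransGen_of_ne_of_right_unique (hr : Relator.RightUnique r)
    (hacyc : ∀ x, ¬ TransGen r x x) (hab : a ≠ b) (hav : r a v) (hbv : r b v) :
    ¬ ReflTransGen r a b := by
  intro h
  rcases h.cases_head with rfl | ⟨c, hac, hcb⟩
  · exact hab rfl
  · obtain rfl := hr hac hav
    exact hacyc c (TransGen.tail' hcb hbv)

theorem disjoint_reflTransGen_of_ne_of_right_unique (hr : Relator.RightUnique r)
    (hacyc : ∀ x, ¬ TransGen r x x) (hab : a ≠ b) (hav : r a v) (hbv : r b v) :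
    Disjoint {w | ReflTransGen r w a} {w | ReflTransGen r w b} := by
  refine Set.disjoint_left.2 fun w hwa hwb => ?_
  rcases ReflTransGen.total_of_right_unique hr hwa hwb with h | h
  · exact not_reflTransGen_of_ne_of_right_unique hr hacyc hab hav hbv h
  · exact not_reflTransGen_of_ne_of_right_unique hr hacyc hab.symm hbv hav h

theorem not_reflTransGen_of_acyclic (hacyc : ∀ x, ¬ TransGen r x x) (hav : r a v) :
    ¬ ReflTransGen r v a :=
  fun h => hacyc v (TransGen.tail' h hav)

variable [Finite α]

theorem one_le_ncard_reflTransGen : 1 ≤ {w | ReflTransGen r w v}.ncard :=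
  (Set.ncard_pos).2 ⟨v, ReflTransGen.refl⟩

theorem ncard_reflTransGen_lt_of_acyclic (hacyc : ∀ x, ¬ TransGen r x x) (hav : r a v) :
    {w | ReflTransGen r w a}.ncard < {w | ReflTransGen r w v}.ncard :=
  Set.ncard_lt_ncard <| Set.ssubset_iff_of_subset (fun _ hw => ReflTransGen.tail hw hav) |>.2
    ⟨v, ReflTransGen.refl, not_reflTransGen_of_acyclic hacyc hav⟩

theorem ncard_reflTransGen_add_ncard_lt (hr : Relator.RightUnique r)
    (hacyc : ∀ x, ¬ TransGen r x x) (hab : a ≠ b) (hav : r a v) (hbv : r b v) :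
    {w | ReflTransGen r w a}.ncard + {w | ReflTransGen r w b}.ncard <
      {w | ReflTransGen r w v}.ncard := by
  rw [← Set.ncard_union_eq (disjoint_reflTransGen_of_ne_of_right_unique hr hacyc hab hav hbv)]
  refine Set.ncard_lt_ncard <| Set.ssubset_iff_of_subset ?_ |>.2 ⟨v, ReflTransGen.refl, ?_⟩
  · rintro w (hw | hw)
    exacts [hw.tail hav, hw.tail hbv]
  · rintro (h | h)
    exacts [not_reflTransGen_of_acyclic hacyc hav h, not_reflTransGen_of_acyclic hacyc hbv h]

theorem fib_sub_one_le_ncard_reflTransGen (hr : Relator.RightUnique r)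
    (hacyc : ∀ x, ¬ TransGen r x x) (rank : α → ℕ)
    (h2 : ∀ v, 2 ≤ rank v → ∃ a b, a ≠ b ∧ r a v ∧ r b v ∧
      rank a = rank v - 1 ∧ rank b = rank v - 2)
    (h1 : ∀ v, rank v = 1 → ∃ a, r a v ∧ rank a = 0) (v : α) :
    Nat.fib (rank v + 3) - 1 ≤ {w | ReflTransGen r w v}.ncard := by
  suffices ∀ n v, rank v = n → Nat.fib (n + 3) - 1 ≤ {w | ReflTransGen r w v}.ncard from
    this _ v rfl
  intro n
  induction n using Nat.twoStepInduction with
  | zero =>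
    intro v _
    have : Nat.fib (0 + 3) = 2 := rfl
    have := one_le_ncard_reflTransGen (r := r) (v := v)
    omega
  | one =>
    intro v hv
    obtain ⟨a, hav, -⟩ := h1 v hv
    have := ncard_reflTransGen_lt_of_acyclic hacyc hav
    have := one_le_ncard_reflTransGen (r := r) (v := a)
    have : Nat.fib (1 + 3) = 3 := rfl
    omega
  | more n ih₀ ih₁ =>
    intro v hv
    obtain ⟨a, b, hab, hav, hbv, hra, hrb⟩ := h2 v (by omega)
    have ha := ih₁ a (by omega)
    have hb := ih₀ b (by omega)
    have := ncard_reflTransGen_add_ncard_lt hr hacyc hab hav hbv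
    have : Nat.fib (n + 2 + 3) = Nat.fib (n + 3) + Nat.fib (n + 1 + 3) := Nat.fib_add_two
    omega

end Relation

/-- Balance lemma for multi-root hollow heaps (Lemma 2.2). In a finite forest
(given by a `parent` function, with no cycles) whose nodes carry ranks such that
every node of rank `r ≥ 2` has children of ranks `r-1` and `r-2`, and every node
of rank `1` has a child of rank `0`, every node of rank `r` has at least
`F_{r+3} - 1` descendants (itself included). -/
theorem rank_invariant_descendants {V : Type*} [Fintype V]
    (parent : V → Option V) (rank : V → ℕ)
    (hacyc : ∀ v, ¬ Relation.TransGen (fun a b => parent a = some b) v v)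
    (h2 : ∀ v, 2 ≤ rank v → ∃ a b, a ≠ b ∧ parent a = some v ∧ parent b = some v ∧
      rank a = rank v - 1 ∧ rank b = rank v - 2)
    (h1 : ∀ v, rank v = 1 → ∃ a, parent a = some v ∧ rank a = 0) :
    ∀ v : V, Nat.fib (rank v + 3) - 1 ≤
      {w : V | Relation.ReflTransGen (fun a b => parent a = some b) w v}.ncard :=
  fib_sub_one_le_ncard_reflTransGen (fun _ _ _ hb hc => Option.some.inj (hb.symm.trans hc))
    hacyc rank h2 h1
end

section
/- Let f : ℕ → ℕ be a positive non-decreasing function with f(r) ≤ r for r ≥ 1. Starting from rank k, repeatedly replacing rank r by max(r - f(r), 0) reaches 0 in at most k / f(⌊√k⌋) + √k steps (for k ≥ 1). -/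
/-! Above `s = ⌊√k⌋` each step lowers the rank `r` by `f r ≥ f s`, so after `j ≤ k / f s` steps
the rank is at most `s`; below that each step lowers it by at least one, so at most `s ≤ √k`
further steps reach `0`. -/

namespace Function

theorem iterate_le_sub {g : ℕ → ℕ} (hg : ∀ n, g n ≤ n - 1) (n j : ℕ) : g^[j] n ≤ n - j := by
  induction j generalizing n with
  | zero => simp
  | succ j ih =>
    rw [iterate_succ_apply]
    exact (ih (g n)).trans (by have := hg n; omega)

theorem iterate_self_eq_zero {g : ℕ → ℕ} (hg : ∀ n, g n ≤ n - 1) (n : ℕ) : g^[n] n = 0 :=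
  Nat.eq_zero_of_le_zero (by simpa using iterate_le_sub hg n n)

theorem exists_iterate_le_of_add_le {g : ℕ → ℕ} {s c : ℕ} (hc : 0 < c)
    (hg : ∀ x, s < x → g x + c ≤ x) (k : ℕ) : ∃ j, g^[j] k ≤ s ∧ j * c + g^[j] k ≤ k := by
  induction k using Nat.strong_induction_on with
  | _ k ih =>
    by_cases hks : k ≤ s
    · exact ⟨0, hks, by simp⟩
    · have hstep := hg k (not_le.mp hks)
      obtain ⟨j, hjs, hjk⟩ := ih (g k) (by omega)
      refine ⟨j + 1, by rwa [iterate_succ_apply], ?_⟩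
      rw [iterate_succ_apply]
      linarith

end Function

open Function in
theorem decreasekey_steps_bound_general (f : ℕ → ℕ) (hpos : ∀ r, 1 ≤ f r)
    (hmono : Monotone f) (hle : ∀ r, 1 ≤ r → f r ≤ r) (k : ℕ) :
    ∃ m : ℕ, (fun r => r - f r)^[m] k = 0 ∧
      (m : ℝ) ≤ (k : ℝ) / (f (Nat.sqrt k) : ℝ) + Real.sqrt k := by
  set g : ℕ → ℕ := fun r => r - f r
  have hg_pred : ∀ n, g n ≤ n - 1 := fun n => by have := hpos n; dsimp only [g]; omega
  have hg_above : ∀ x, Nat.sqrt k < x → g x + f (Nat.sqrt k) ≤ x := fun x hx => by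
    have := hmono hx.le
    have := hle x (by omega)
    dsimp only [g]
    omega
  obtain ⟨j, hj_sqrt, hj_k⟩ := exists_iterate_le_of_add_le (hpos _) hg_above k
  refine ⟨g^[j] k + j, by rw [iterate_add_apply, iterate_self_eq_zero hg_pred], ?_⟩
  have hj : (j : ℝ) ≤ k / f (Nat.sqrt k) := by
    rw [le_div_iff₀ (by exact_mod_cast hpos _)]
    exact_mod_cast (Nat.le_add_right _ _).trans hj_k
  have hrest : (g^[j] k : ℝ) ≤ Real.sqrt k :=
    (Nat.cast_le.mpr hj_sqrt).trans Real.nat_sqrt_le_real_sqrt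
  push_cast
  linarith

/-- Let `f : ℕ → ℕ` be positive, non-decreasing, with `f r ≤ r` for `r ≥ 1`.
Starting from rank `k ≥ 1` and repeatedly replacing rank `r` by
`max (r - f r) 0` (natural subtraction), rank `0` is reached in at most
`k / f (⌊√k⌋) + √k` steps. -/
theorem decreasekey_steps_bound (f : ℕ → ℕ) (hpos : ∀ r, 1 ≤ f r)
    (hmono : Monotone f) (hle : ∀ r, 1 ≤ r → f r ≤ r) (k : ℕ) (hk : 1 ≤ k) :
    ∃ m : ℕ, (fun r => r - f r)^[m] k = 0 ∧
      (m : ℝ) ≤ (k : ℝ) / (f (Nat.sqrt k) : ℝ) + Real.sqrt k :=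
  decreasekey_steps_bound_general f hpos hmono hle k
end
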